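/- (Theorem 1, forward stability of IR(ω).) Let ω, ε, L, q be real numbers with 0 < ω < 2, 0 < ε ≤ 0.01, L ≥ 0, 0 ≤ q ≤ 0.1, L·ε·κ(A) ≤ 0.01, and |1-ω| + ω·q ≤ 0.6. Let (x̃_k), (Δr_k), (Δp_k), (D_k^{(1)}), (D_k^{(2)}) satisfy, for every k ∈ ℕ: ‖Δr_k‖ ≤ L·ε·(‖b‖ + ‖A‖·‖x̃_k‖); p*_k = A⁻¹(b - A x̃_k + Δr_k); ‖Δp_k‖ ≤ q·‖p*_k‖; p̃_k = p*_k + Δp_k; ‖D_k^{(i)}‖ ≤ ε for i = 1, 2; and x̃_{k+1} = (I + D_k^{(1)})(x̃_k + (I + D_k^{(2)})·ω·p̃_k); and assume ‖x̃_0 - x*‖ ≤ q·‖x*‖. Then there exists k* ∈ ℕ such that for every k ≥ k*, ‖x̃_k - x*‖ ≤ (11.6·L + 4.2)·ε·κ(A)·‖x*‖. -/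

import Mathlib

/-!
Write `eₖ = x̃ₖ - x*` and `κ = κ(A)`. Since `b = A x*`, the exact correction is
`p*ₖ = -eₖ + A⁻¹Δrₖ`, so one step of the iteration is the relaxation
`eₖ₊₁ ≈ (1 - ω) eₖ + ω (A⁻¹Δrₖ + Δpₖ)` up to the two relative perturbations `D₁, D₂`.
With `‖A⁻¹Δrₖ‖ ≤ Lεκ (2‖x*‖ + ‖eₖ‖)` and `|1 - ω| + ωq ≤ 0.6` this gives the contraction
`‖eₖ₊₁‖ ≤ 0.65 ‖eₖ‖ + (3.6 Lεκ + 1.1 ε) ‖x*‖`. Iterating from `‖e₀‖ ≤ q ‖x*‖`, the transient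
`0.65ᵏ q ‖x*‖` eventually drops below `ε ‖x*‖ ≤ εκ ‖x*‖`, and the fixed point
`(3.6 Lεκ + 1.1 ε) ‖x*‖ / 0.35` plus this slack is at most `(11.6 L + 4.2) εκ ‖x*‖`.
-/

open Matrix Filter
open scoped Matrix.Norms.L2Operator

/-- Matrix–vector multiplication viewed as a map on Euclidean space,
so that `‖·‖` is the Euclidean 2-norm. -/
noncomputable def mulV {n : ℕ} (A : Matrix (Fin n) (Fin n) ℝ)
    (x : EuclideanSpace ℝ (Fin n)) : EuclideanSpace ℝ (Fin n) :=
  (EuclideanSpace.equiv (Fin n) ℝ).symm (A *ᵥ x)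

theorem le_pow_mul_add_div_of_le_mul_add {e : ℕ → ℝ} {r c : ℝ} (hr0 : 0 ≤ r) (hr1 : r < 1)
    (hc : 0 ≤ c) (h : ∀ k, e (k + 1) ≤ r * e k + c) (k : ℕ) :
    e k ≤ r ^ k * e 0 + c / (1 - r) := by
  have h1r : 0 < 1 - r := sub_pos.mpr hr1
  induction k with
  | zero => simpa using div_nonneg hc h1r.le
  | succ k ih =>
    calc e (k + 1) ≤ r * (r ^ k * e 0 + c / (1 - r)) + c := (h k).trans (by gcongr)
      _ = r ^ (k + 1) * e 0 + c / (1 - r) := by field_simp; ring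

section RelaxedStep

variable {E : Type*} [NormedAddCommGroup E] [NormedSpace ℝ E]

theorem norm_one_add_apply_sub_le {D : E →L[ℝ] E} {ε : ℝ} (hD : ‖D‖ ≤ ε) (y z : E) :
    ‖(1 + D) y - z‖ ≤ ‖y - z‖ + ε * (‖z‖ + ‖y - z‖) := by
  have hDy : ‖D y‖ ≤ ε * (‖z‖ + ‖y - z‖) :=
    (D.le_opNorm y).trans (mul_le_mul hD (norm_le_norm_add_norm_sub' y z) (norm_nonneg _)
      ((norm_nonneg D).trans hD))
  calc ‖(1 + D) y - z‖ = ‖(y - z) + D y‖ := by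
        rw [_root_.add_apply, one_apply_eq_self]; abel_nf
    _ ≤ ‖y - z‖ + ε * (‖z‖ + ‖y - z‖) := (norm_add_le _ _).trans (by gcongr)

theorem norm_relaxed_update_sub_le {D : E →L[ℝ] E} {ω ε : ℝ} (hω : 0 ≤ ω) (hD : ‖D‖ ≤ ε)
    (x xs d Δp : E) :
    ‖x + (1 + D) (ω • (xs - x + d + Δp)) - xs‖ ≤
      |1 - ω| * ‖x - xs‖ + ω * (‖d‖ + ‖Δp‖) + ω * (ε * ‖xs - x + d + Δp‖) := by
  set pt := xs - x + d + Δp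
  have hsplit : x + (1 + D) (ω • pt) - xs = (1 - ω) • (x - xs) + ω • (d + Δp) + ω • D pt := by
    rw [_root_.add_apply, one_apply_eq_self, map_smul]
    simp only [pt, smul_add, smul_sub, sub_smul, one_smul]
    abel
  have hDpt : ‖D pt‖ ≤ ε * ‖pt‖ := (D.le_opNorm pt).trans (by gcongr)
  rw [hsplit]
  refine norm_add₃_le.trans ?_
  simp only [norm_smul, Real.norm_eq_abs, abs_of_nonneg hω]
  gcongr
  exact norm_add_le _ _

variable {ω ε μ q : ℝ} {x xs d Δp : E}

-- `d` stands for `A⁻¹ Δrₖ`, so that `xs - x + d` is the exact correction `p*ₖ`.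
theorem norm_relaxed_update_sub_le_of_le {D : E →L[ℝ] E} (hω0 : 0 < ω) (hε : ε ≤ 0.01)
    (hμ0 : 0 ≤ μ) (hμ : μ ≤ 0.01) (hq0 : 0 ≤ q) (hq : q ≤ 0.1) (hωq : |1 - ω| + ω * q ≤ 0.6)
    (hD : ‖D‖ ≤ ε) (hd : ‖d‖ ≤ μ * (2 * ‖xs‖ + ‖x - xs‖)) (hΔp : ‖Δp‖ ≤ q * ‖xs - x + d‖) :
    ‖x + (1 + D) (ω • (xs - x + d + Δp)) - xs‖ ≤
      0.64 * ‖x - xs‖ + 3.52 * μ * ‖xs‖ + 0.036 * ε * ‖xs‖ := by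
  set e := ‖x - xs‖
  set X := ‖xs‖
  set P := ‖xs - x + d‖
  set T := ‖xs - x + d + Δp‖
  have he : 0 ≤ e := norm_nonneg _
  have hX : 0 ≤ X := norm_nonneg _
  have hε0 : 0 ≤ ε := (norm_nonneg _).trans hD
  have hω : ω ≤ 1.6 := by
    linarith [le_abs_self (ω - 1), abs_sub_comm 1 ω, mul_nonneg hω0.le hq0]
  have hωq16 : ω * q ≤ 0.16 := by nlinarith
  have hP : P ≤ 1.01 * e + 2 * μ * X := by
    have := norm_add_le (xs - x) d
    rw [norm_sub_rev] at this
    nlinarith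
  have hT : T ≤ 1.1 * P := by nlinarith [norm_add_le (xs - x + d) Δp, norm_nonneg (xs - x + d)]
  have hωd : ω * ‖d‖ ≤ 0.016 * e + 3.2 * μ * X := by
    nlinarith [mul_le_mul hω hd (norm_nonneg d) (by norm_num : (0:ℝ) ≤ 1.6), mul_nonneg hμ0 he]
  have hωΔp : |1 - ω| * e + ω * ‖Δp‖ ≤ 0.606 * e + 0.32 * μ * X := by
    nlinarith [mul_le_mul_of_nonneg_left hΔp hω0.le,
      mul_le_mul_of_nonneg_left hP (mul_nonneg hω0.le hq0),
      mul_nonneg (by linarith : (0:ℝ) ≤ 0.6 - |1 - ω| - ω * q) he,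
      mul_nonneg (by linarith : (0:ℝ) ≤ 0.16 - ω * q) (mul_nonneg hμ0 hX)]
  have hωεT : ω * (ε * T) ≤ 0.018 * e + 0.036 * ε * X := by
    nlinarith [mul_nonneg (by linarith : (0:ℝ) ≤ 1.6 - ω) (mul_nonneg hε0 (norm_nonneg (xs - x + d + Δp))),
      mul_nonneg hε0 (by linarith : (0:ℝ) ≤ 1.1 * P - T),
      mul_nonneg hε0 (by linarith : (0:ℝ) ≤ 1.01 * e + 2 * μ * X - P),
      mul_nonneg (by linarith : (0:ℝ) ≤ 0.01 - ε) he,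
      mul_nonneg (by linarith : (0:ℝ) ≤ 0.01 - μ) (mul_nonneg hε0 hX)]
  calc _ ≤ |1 - ω| * e + ω * (‖d‖ + ‖Δp‖) + ω * (ε * T) :=
        norm_relaxed_update_sub_le hω0.le hD x xs d Δp
    _ ≤ 0.64 * e + 3.52 * μ * X + 0.036 * ε * X := by linarith

theorem norm_refinement_step_sub_le {D₁ D₂ : E →L[ℝ] E} (hω0 : 0 < ω) (hε : ε ≤ 0.01)
    (hμ0 : 0 ≤ μ) (hμ : μ ≤ 0.01) (hq0 : 0 ≤ q) (hq : q ≤ 0.1) (hωq : |1 - ω| + ω * q ≤ 0.6)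
    (hD₁ : ‖D₁‖ ≤ ε) (hD₂ : ‖D₂‖ ≤ ε) (hd : ‖d‖ ≤ μ * (2 * ‖xs‖ + ‖x - xs‖))
    (hΔp : ‖Δp‖ ≤ q * ‖xs - x + d‖) :
    ‖(1 + D₁) (x + (1 + D₂) (ω • (xs - x + d + Δp))) - xs‖ ≤
      0.65 * ‖x - xs‖ + (3.6 * μ + 1.1 * ε) * ‖xs‖ := by
  set y := x + (1 + D₂) (ω • (xs - x + d + Δp))
  have hy := norm_relaxed_update_sub_le_of_le hω0 hε hμ0 hμ hq0 hq hωq hD₂ hd hΔp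
  have hε0 : 0 ≤ ε := (norm_nonneg _).trans hD₁
  calc ‖(1 + D₁) y - xs‖ ≤ ‖y - xs‖ + ε * (‖xs‖ + ‖y - xs‖) := norm_one_add_apply_sub_le hD₁ y xs
    _ ≤ 0.65 * ‖x - xs‖ + (3.6 * μ + 1.1 * ε) * ‖xs‖ := by
        nlinarith [norm_nonneg (y - xs), norm_nonneg xs, norm_nonneg (x - xs)]

end RelaxedStep

section MulV

variable {n : ℕ}

theorem mulV_eq_toEuclideanCLM (A : Matrix (Fin n) (Fin n) ℝ) (x : EuclideanSpace ℝ (Fin n)) :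
    mulV A x = toEuclideanCLM (𝕜 := ℝ) A x := rfl

theorem norm_mulV_le (A : Matrix (Fin n) (Fin n) ℝ) (x : EuclideanSpace ℝ (Fin n)) :
    ‖mulV A x‖ ≤ ‖A‖ * ‖x‖ :=
  l2_opNorm_mulVec A x

theorem mulV_one_add (D : Matrix (Fin n) (Fin n) ℝ) (x : EuclideanSpace ℝ (Fin n)) :
    mulV (1 + D) x = (1 + toEuclideanCLM (𝕜 := ℝ) D) x := by
  rw [mulV_eq_toEuclideanCLM, map_add, map_one]

theorem mulV_mulV (A B : Matrix (Fin n) (Fin n) ℝ) (x : EuclideanSpace ℝ (Fin n)) :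
    mulV A (mulV B x) = mulV (A * B) x := by
  simp only [mulV_eq_toEuclideanCLM, map_mul]
  rfl

theorem mulV_inv_mulV {A : Matrix (Fin n) (Fin n) ℝ} (hA : IsUnit A.det)
    (x : EuclideanSpace ℝ (Fin n)) : mulV A⁻¹ (mulV A x) = x := by
  rw [mulV_mulV, nonsing_inv_mul A hA, mulV_eq_toEuclideanCLM, map_one, one_apply_eq_self]

theorem mulV_mulV_inv {A : Matrix (Fin n) (Fin n) ℝ} (hA : IsUnit A.det)
    (x : EuclideanSpace ℝ (Fin n)) : mulV A (mulV A⁻¹ x) = x := by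
  rw [mulV_mulV, mul_nonsing_inv A hA, mulV_eq_toEuclideanCLM, map_one, one_apply_eq_self]

theorem norm_le_cond_mul_norm {A : Matrix (Fin n) (Fin n) ℝ} (hA : IsUnit A.det)
    (x : EuclideanSpace ℝ (Fin n)) : ‖x‖ ≤ ‖A⁻¹‖ * ‖A‖ * ‖x‖ :=
  calc ‖x‖ = ‖mulV A⁻¹ (mulV A x)‖ := by rw [mulV_inv_mulV hA]
    _ ≤ ‖A⁻¹‖ * (‖A‖ * ‖x‖) := (norm_mulV_le _ _).trans (by gcongr; exact norm_mulV_le _ _)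
    _ = ‖A⁻¹‖ * ‖A‖ * ‖x‖ := (mul_assoc _ _ _).symm

theorem mulV_inv_residual_add {A : Matrix (Fin n) (Fin n) ℝ} (hA : IsUnit A.det)
    {b xs : EuclideanSpace ℝ (Fin n)} (hxs : xs = mulV A⁻¹ b) (x r : EuclideanSpace ℝ (Fin n)) :
    mulV A⁻¹ (b - mulV A x + r) = xs - x + mulV A⁻¹ r := by
  simp only [mulV_eq_toEuclideanCLM, map_add, map_sub] at hxs ⊢
  rw [← hxs, ← mulV_eq_toEuclideanCLM, ← mulV_eq_toEuclideanCLM, mulV_inv_mulV hA]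

theorem norm_mulV_inv_le_of_norm_le {A : Matrix (Fin n) (Fin n) ℝ}
    {xs x r : EuclideanSpace ℝ (Fin n)} {c : ℝ} (hc : 0 ≤ c)
    (hr : ‖r‖ ≤ c * (‖mulV A xs‖ + ‖A‖ * ‖x‖)) :
    ‖mulV A⁻¹ r‖ ≤ c * (‖A⁻¹‖ * ‖A‖) * (2 * ‖xs‖ + ‖x - xs‖) := by
  have hAx : ‖mulV A xs‖ + ‖A‖ * ‖x‖ ≤ ‖A‖ * (2 * ‖xs‖ + ‖x - xs‖) := by
    nlinarith [norm_mulV_le A xs, norm_nonneg A, norm_le_norm_add_norm_sub' x xs]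
  calc ‖mulV A⁻¹ r‖ ≤ ‖A⁻¹‖ * (c * (‖A‖ * (2 * ‖xs‖ + ‖x - xs‖))) :=
        (norm_mulV_le _ _).trans (by gcongr; exact hr.trans (by gcongr))
    _ = c * (‖A⁻¹‖ * ‖A‖) * (2 * ‖xs‖ + ‖x - xs‖) := by ring

end MulV

theorem forward_stability_IR_general {n : ℕ} (A : Matrix (Fin n) (Fin n) ℝ) (hA : IsUnit A.det)
    (b : EuclideanSpace ℝ (Fin n))
    (xstar : EuclideanSpace ℝ (Fin n)) (hxstar : xstar = mulV A⁻¹ b)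
    (ω ε L q : ℝ)
    (hω0 : 0 < ω) (hε0 : 0 < ε) (hε : ε ≤ 0.01) (hL : 0 ≤ L)
    (hq0 : 0 ≤ q) (hq : q ≤ 0.1)
    (hcond : L * ε * (‖A⁻¹‖ * ‖A‖) ≤ 0.01)
    (hωq : |1 - ω| + ω * q ≤ 0.6)
    (xt Δr Δp pstar pt : ℕ → EuclideanSpace ℝ (Fin n))
    (D₁ D₂ : ℕ → Matrix (Fin n) (Fin n) ℝ)
    (hΔr : ∀ k, ‖Δr k‖ ≤ L * ε * (‖b‖ + ‖A‖ * ‖xt k‖))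
    (hpstar : ∀ k, pstar k = mulV A⁻¹ (b - mulV A (xt k) + Δr k))
    (hΔp : ∀ k, ‖Δp k‖ ≤ q * ‖pstar k‖)
    (hpt : ∀ k, pt k = pstar k + Δp k)
    (hD₁ : ∀ k, ‖D₁ k‖ ≤ ε) (hD₂ : ∀ k, ‖D₂ k‖ ≤ ε)
    (hxt : ∀ k, xt (k + 1) = mulV (1 + D₁ k) (xt k + mulV (1 + D₂ k) (ω • pt k)))
    (hx0 : ‖xt 0 - xstar‖ ≤ q * ‖xstar‖) :
    ∃ kstar : ℕ, ∀ k ≥ kstar,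
      ‖xt k - xstar‖ ≤ (11.6 * L + 4.2) * ε * (‖A⁻¹‖ * ‖A‖) * ‖xstar‖ := by
  set κ := ‖A⁻¹‖ * ‖A‖
  set X := ‖xstar‖
  set c := (3.6 * (L * ε * κ) + 1.1 * ε) * X
  have hb : b = mulV A xstar := by rw [hxstar, mulV_mulV_inv hA]
  have hμ0 : 0 ≤ L * ε * κ := by positivity
  have hstep : ∀ k, ‖xt (k + 1) - xstar‖ ≤ 0.65 * ‖xt k - xstar‖ + c := by
    intro k
    have hp := mulV_inv_residual_add hA hxstar (xt k) (Δr k)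
    rw [hxt k, hpt k, hpstar k, hp, mulV_one_add, mulV_one_add]
    refine norm_refinement_step_sub_le hω0 hε hμ0 hcond hq0 hq hωq (hD₁ k) (hD₂ k) ?_ ?_
    · exact norm_mulV_inv_le_of_norm_le (by positivity) (hb ▸ hΔr k)
    · simpa only [hpstar k, hp] using hΔp k
  have hiter := le_pow_mul_add_div_of_le_mul_add (e := fun k ↦ ‖xt k - xstar‖) (by norm_num)
    (by norm_num) (by positivity) hstep
  obtain ⟨kstar, hkstar⟩ : ∃ kstar : ℕ, ∀ k ≥ kstar, (0.65 : ℝ) ^ k * q ≤ ε := by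
    have : Tendsto (fun k : ℕ ↦ (0.65 : ℝ) ^ k * q) atTop (nhds 0) := by
      simpa using (tendsto_pow_atTop_nhds_zero_of_lt_one (by norm_num : (0:ℝ) ≤ 0.65)
        (by norm_num)).mul_const q
    exact eventually_atTop.mp (this.eventually_le_const hε0)
  refine ⟨kstar, fun k hk ↦ ?_⟩
  have hdecay : 0.65 ^ k * ‖xt 0 - xstar‖ ≤ ε * X :=
    calc 0.65 ^ k * ‖xt 0 - xstar‖ ≤ 0.65 ^ k * q * X := by rw [mul_assoc]; gcongr
      _ ≤ ε * X := by gcongr; exact hkstar k hk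
  have hεX : ε * X ≤ ε * κ * X := by
    rw [mul_assoc ε κ]; exact mul_le_mul_of_nonneg_left (norm_le_cond_mul_norm hA xstar) hε0.le
  calc ‖xt k - xstar‖ ≤ 0.65 ^ k * ‖xt 0 - xstar‖ + c / (1 - 0.65) := hiter k
    _ ≤ ε * X + c / (1 - 0.65) := by gcongr
    _ ≤ (11.6 * L + 4.2) * ε * κ * X := by
        norm_num [c]
        linarith [mul_nonneg hμ0 (norm_nonneg xstar), mul_nonneg hε0.le (norm_nonneg xstar)]

theorem forward_stability_IR {n : ℕ} (A : Matrix (Fin n) (Fin n) ℝ) (hA : IsUnit A.det)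
    (b : EuclideanSpace ℝ (Fin n))
    (xstar : EuclideanSpace ℝ (Fin n)) (hxstar : xstar = mulV A⁻¹ b)
    (ω ε L q : ℝ)
    (hω0 : 0 < ω) (hω2 : ω < 2) (hε0 : 0 < ε) (hε : ε ≤ 0.01) (hL : 0 ≤ L)
    (hq0 : 0 ≤ q) (hq : q ≤ 0.1)
    (hcond : L * ε * (‖A⁻¹‖ * ‖A‖) ≤ 0.01)
    (hωq : |1 - ω| + ω * q ≤ 0.6)
    (xt Δr Δp pstar pt : ℕ → EuclideanSpace ℝ (Fin n))
    (D₁ D₂ : ℕ → Matrix (Fin n) (Fin n) ℝ)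
    (hΔr : ∀ k, ‖Δr k‖ ≤ L * ε * (‖b‖ + ‖A‖ * ‖xt k‖))
    (hpstar : ∀ k, pstar k = mulV A⁻¹ (b - mulV A (xt k) + Δr k))
    (hΔp : ∀ k, ‖Δp k‖ ≤ q * ‖pstar k‖)
    (hpt : ∀ k, pt k = pstar k + Δp k)
    (hD₁ : ∀ k, ‖D₁ k‖ ≤ ε) (hD₂ : ∀ k, ‖D₂ k‖ ≤ ε)
    (hxt : ∀ k, xt (k + 1) = mulV (1 + D₁ k) (xt k + mulV (1 + D₂ k) (ω • pt k)))
    (hx0 : ‖xt 0 - xstar‖ ≤ q * ‖xstar‖) :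
    ∃ kstar : ℕ, ∀ k ≥ kstar,
      ‖xt k - xstar‖ ≤ (11.6 * L + 4.2) * ε * (‖A⁻¹‖ * ‖A‖) * ‖xstar‖ :=
  forward_stability_IR_general A hA b xstar hxstar ω ε L q hω0 hε0 hε hL hq0 hq hcond hωq xt Δr Δp
    pstar pt D₁ D₂ hΔr hpstar hΔp hpt hD₁ hD₂ hxt hx0
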